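/- Let Ω ⊆ ℝ^M be a bounded Lebesgue-measurable set, N ∈ ℕ, and let C₁, γ > 0. For each n ∈ ℕ let Hₙ : Ω × ℝ^N → ℝ be a Carathéodory function such that |Hₙ(x,ξ)| ≤ C₁(1 + |ξ|^γ) for a.e. x ∈ Ω, all ξ ∈ ℝ^N and all n. Suppose H : Ω × ℝ^N → ℝ is a Carathéodory function such that for a.e. x ∈ Ω, Hₙ(x,·) → H(x,·) uniformly on every compact subset of ℝ^N as n → ∞. If p ∈ [γ, ∞) and (uₙ) is a sequence of measurable functions Ω → ℝ^N with uₙ → u in L^p(Ω; ℝ^N), then Hₙ(·, uₙ(·)) → H(·, u(·)) in L^{p/γ}(Ω). -/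

import Mathlib

/-!
Vitali's theorem reduces `L^{p/γ}` convergence (note `p/γ ≥ 1`) to uniform integrability plus
convergence in measure. By the growth bound, `|Hₙ(x, uₙ(x))| ≤ C₁ (1 + ‖uₙ(x)‖^γ)`, and
`‖uₙ‖^γ ≤ 2^γ (‖uₙ - u‖^γ + ‖u‖^γ)` where `‖uₙ - u‖^γ → 0` in `L^{p/γ}`; so the superpositions are
uniformly integrable. For convergence in measure, every subsequence of `uₙ` has a further
subsequence converging a.e., and along it `Hₙ(x, uₙ(x)) → H(x, u(x))` because `Hₙ(x, ·) → H(x, ·)`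
locally uniformly and `H(x, ·)` is continuous.
-/

open MeasureTheory Filter Set Topology
open scoped ENNReal

/-- The `L^p(Ω)` (quasi-)norm of a function `g`, where `Ω ⊆ ℝ^M` carries the Lebesgue measure. -/
noncomputable def lpNorm {M : ℕ} {E : Type*} [NormedAddCommGroup E]
    (Ω : Set (Fin M → ℝ)) (p : ℝ) (g : (Fin M → ℝ) → E) : ℝ≥0∞ :=
  eLpNorm g (ENNReal.ofReal p) (volume.restrict Ω)

theorem Real.add_rpow_le_two_rpow_mul_rpow_add_rpow {a b γ : ℝ} (ha : 0 ≤ a) (hb : 0 ≤ b)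
    (hγ : 0 ≤ γ) : (a + b) ^ γ ≤ 2 ^ γ * (a ^ γ + b ^ γ) := calc
  (a + b) ^ γ ≤ (2 * max a b) ^ γ := by gcongr; rw [two_mul]; gcongr <;> simp
  _ = 2 ^ γ * max a b ^ γ := Real.mul_rpow zero_le_two (le_max_of_le_left ha)
  _ ≤ 2 ^ γ * (a ^ γ + b ^ γ) := by
    gcongr
    rcases le_total a b with h | h
    · simpa [max_eq_right h] using Real.rpow_nonneg ha γ
    · simpa [max_eq_left h] using Real.rpow_nonneg hb γ

theorem TendstoLocallyUniformly.comp_tendsto {ι κ X β : Type*} [TopologicalSpace X]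
    [UniformSpace β] {F : ι → X → β} {f : X → β} {p : Filter ι} {p' : Filter κ}
    (h : TendstoLocallyUniformly F f p) {φ : κ → ι} (hφ : Tendsto φ p' p) :
    TendstoLocallyUniformly (fun k => F (φ k)) f p' :=
  fun u hu x => (h u hu x).imp fun _ ht => ⟨ht.1, hφ.eventually ht.2⟩

namespace MeasureTheory

variable {α E : Type*} [MeasurableSpace α] {μ : Measure α}

theorem AEStronglyMeasurable.aemeasurable_caratheodory_comp [TopologicalSpace E]
    {F : α → E → ℝ} (hF : ∀ ξ, AEMeasurable (fun x => F x ξ) μ)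
    (hFc : ∀ᵐ x ∂μ, Continuous (F x)) {v : α → E} (hv : AEStronglyMeasurable v μ) :
    AEMeasurable (fun x => F x (v x)) μ := by
  obtain ⟨w, hw, hvw⟩ := hv
  have simple (s : SimpleFunc α E) : AEMeasurable (fun x => F x (s x)) μ := by
    have hs : (fun x => F x (s x)) = ∑ c ∈ s.range, (s ⁻¹' {c}).indicator (F · c) := by
      classical
      ext x
      simp [Set.indicator_apply, eq_comm]
    rw [hs]
    exact Finset.aemeasurable_sum _ fun c _ => (hF c).indicator (s.measurableSet_fiber c)
  have hw_comp : AEMeasurable (fun x => F x (w x)) μ :=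
    aemeasurable_of_tendsto_metrizable_ae' (fun n => simple (hw.approx n)) <| by
      filter_upwards [hFc] with x hx using (hx.tendsto _).comp (hw.tendsto_approx x)
  exact hw_comp.congr <| hvw.mono fun x hx => by simp only [hx]

theorem TendstoInMeasure.caratheodory_comp [IsFiniteMeasure μ] {β : Type*}
    [PseudoEMetricSpace E] [PseudoEMetricSpace β] {F : ℕ → α → E → β} {f : α → E → β}
    {v : ℕ → α → E} {w : α → E} (hv : TendstoInMeasure μ v atTop w)
    (hF : ∀ᵐ x ∂μ, TendstoLocallyUniformly (fun n => F n x) (f x) atTop)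
    (hf : ∀ᵐ x ∂μ, Continuous (f x))
    (hFv : ∀ n, AEStronglyMeasurable (fun x => F n x (v n x)) μ) :
    TendstoInMeasure μ (fun n x => F n x (v n x)) atTop (fun x => f x (w x)) := by
  refine (exists_seq_tendstoInMeasure_atTop_iff hFv).2 fun ns hns => ?_
  obtain ⟨ns', hns', hvw⟩ := (hv.comp hns.tendsto_atTop).exists_seq_tendsto_ae
  refine ⟨ns', hns', ?_⟩
  filter_upwards [hvw, hF, hf] with x hvx hFx hfx
  exact (hFx.comp_tendsto (hns.comp hns').tendsto_atTop).tendsto_comp hfx.continuousAt hvx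

variable {p : ℝ≥0∞}

theorem UnifIntegrable.of_norm_le {ι β γ : Type*} [NormedAddCommGroup β] [NormedAddCommGroup γ]
    {f : ι → α → β} {g : ι → α → γ} (hg : UnifIntegrable g p μ)
    (hfg : ∀ i, ∀ᵐ x ∂μ, ‖f i x‖ ≤ ‖g i x‖) : UnifIntegrable f p μ := by
  intro ε hε
  obtain ⟨δ, hδ, hgδ⟩ := hg hε
  refine ⟨δ, hδ, fun i s hs hμs => (eLpNorm_mono_ae ?_).trans (hgδ i s hs hμs)⟩
  filter_upwards [hfg i] with x hx
  by_cases hxs : x ∈ s <;> simp [hxs, hx]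

theorem UnifIntegrable.const_mul {ι : Type*} {f : ι → α → ℝ} (hf : UnifIntegrable f p μ)
    (c : ℝ) : UnifIntegrable (fun i x => c * f i x) p μ := by
  intro ε hε
  obtain ⟨δ, hδ, hfδ⟩ := hf (div_pos hε (by positivity : 0 < ‖c‖ + 1))
  refine ⟨δ, hδ, fun i s hs hμs => ?_⟩
  calc eLpNorm (s.indicator fun x => c * f i x) p μ
      = ‖c‖ₑ * eLpNorm (s.indicator (f i)) p μ := by
        rw [← eLpNorm_const_smul]; congr 1; ext x; by_cases hx : x ∈ s <;> simp [hx]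
    _ ≤ ‖c‖ₑ * ENNReal.ofReal (ε / (‖c‖ + 1)) := by gcongr; exact hfδ i s hs hμs
    _ ≤ ENNReal.ofReal ε := by
        rw [← ofReal_norm, ← ENNReal.ofReal_mul (norm_nonneg _)]
        refine ENNReal.ofReal_le_ofReal ?_
        rw [mul_div_assoc', div_le_iff₀ (by positivity)]
        nlinarith

variable [NormedAddCommGroup E]

theorem MemLp.norm_rpow_div_ofReal {f : α → E} (hf : MemLp f p μ) {γ : ℝ} (hγ : 0 ≤ γ) :
    MemLp (fun x => ‖f x‖ ^ γ) (p / ENNReal.ofReal γ) μ := by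
  simpa [ENNReal.toReal_ofReal hγ] using hf.norm_rpow_div (ENNReal.ofReal γ)

theorem unifIntegrable_norm_rpow_of_tendsto_eLpNorm {γ : ℝ} (hγ : 0 < γ) (hp : p ≠ ∞)
    (hpγ : 1 ≤ p / ENNReal.ofReal γ) {v : ℕ → α → E} {w : α → E}
    (hv : ∀ n, MemLp (v n) p μ) (hw : MemLp w p μ)
    (hvw : Tendsto (fun n => eLpNorm (v n - w) p μ) atTop (𝓝 0)) :
    UnifIntegrable (fun n x => ‖v n x‖ ^ γ) (p / ENNReal.ofReal γ) μ := by
  set q := p / ENNReal.ofReal γ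
  have hγ' : ENNReal.ofReal γ ≠ 0 := by simpa using hγ
  have hq : q ≠ ∞ := ENNReal.div_ne_top hp hγ'
  have hdiff : Tendsto (fun n => eLpNorm (fun x => ‖v n x - w x‖ ^ γ) q μ) atTop (𝓝 0) := by
    have hqγ : q * ENNReal.ofReal γ = p := ENNReal.div_mul_cancel hγ' ENNReal.ofReal_ne_top
    simp_rw [eLpNorm_norm_rpow _ hγ, hqγ]
    have := ((ENNReal.continuous_rpow_const (y := γ)).tendsto 0).comp hvw
    rwa [ENNReal.zero_rpow_of_pos hγ] at this
  have hdiff_mem n := ((hv n).sub hw).norm_rpow_div_ofReal hγ.le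
  have hsum : UnifIntegrable (fun n x => ‖v n x - w x‖ ^ γ + ‖w x‖ ^ γ) q μ :=
    (unifIntegrable_of_tendsto_Lp_zero hpγ hq hdiff_mem hdiff).add
      (unifIntegrable_const hpγ hq (hw.norm_rpow_div_ofReal hγ.le)) hpγ
      (fun n => (hdiff_mem n).1) fun _ => (hw.norm_rpow_div_ofReal hγ.le).1
  refine (hsum.const_mul (2 ^ γ)).of_norm_le fun n => Eventually.of_forall fun x => ?_
  calc ‖‖v n x‖ ^ γ‖ = ‖v n x‖ ^ γ := Real.norm_of_nonneg (by positivity)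
    _ ≤ (‖v n x - w x‖ + ‖w x‖) ^ γ := by gcongr; exact norm_le_norm_sub_add _ _
    _ ≤ 2 ^ γ * (‖v n x - w x‖ ^ γ + ‖w x‖ ^ γ) :=
      Real.add_rpow_le_two_rpow_mul_rpow_add_rpow (norm_nonneg _) (norm_nonneg _) hγ.le
    _ ≤ ‖2 ^ γ * (‖v n x - w x‖ ^ γ + ‖w x‖ ^ γ)‖ := Real.le_norm_self _

theorem MemLp.caratheodory_comp_of_growth [IsFiniteMeasure μ] {F : α → E → ℝ} {C γ : ℝ}
    (hγ : 0 ≤ γ) (hF : ∀ᵐ x ∂μ, ∀ ξ, |F x ξ| ≤ C * (1 + ‖ξ‖ ^ γ)) {v : α → E}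
    (hv : MemLp v p μ) (hFv : AEStronglyMeasurable (fun x => F x (v x)) μ) :
    MemLp (fun x => F x (v x)) (p / ENNReal.ofReal γ) μ := by
  have hdom : MemLp (fun x => C * (1 + ‖v x‖ ^ γ)) (p / ENNReal.ofReal γ) μ :=
    ((memLp_const (1 : ℝ)).add (hv.norm_rpow_div_ofReal hγ)).const_mul C
  exact hdom.of_le hFv <| hF.mono fun x hx => (hx _).trans (Real.le_norm_self _)

theorem unifIntegrable_caratheodory_comp_of_growth [IsFiniteMeasure μ] {F : ℕ → α → E → ℝ}
    {C γ : ℝ} (hγ : 0 < γ) (hF : ∀ n, ∀ᵐ x ∂μ, ∀ ξ, |F n x ξ| ≤ C * (1 + ‖ξ‖ ^ γ)) (hp : p ≠ ∞)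
    (hpγ : 1 ≤ p / ENNReal.ofReal γ) {v : ℕ → α → E} {w : α → E}
    (hv : ∀ n, MemLp (v n) p μ) (hw : MemLp w p μ)
    (hvw : Tendsto (fun n => eLpNorm (v n - w) p μ) atTop (𝓝 0)) :
    UnifIntegrable (fun n x => F n x (v n x)) (p / ENNReal.ofReal γ) μ := by
  have hq : p / ENNReal.ofReal γ ≠ ∞ := ENNReal.div_ne_top hp (by simpa using hγ)
  have hdom : UnifIntegrable (fun n x => C * (1 + ‖v n x‖ ^ γ)) (p / ENNReal.ofReal γ) μ :=
    ((unifIntegrable_const hpγ hq (memLp_const (1 : ℝ))).add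
      (unifIntegrable_norm_rpow_of_tendsto_eLpNorm hγ hp hpγ hv hw hvw)
      hpγ (fun _ => aestronglyMeasurable_const)
      fun n => ((hv n).norm_rpow_div_ofReal hγ.le).1).const_mul C
  exact hdom.of_norm_le fun n => (hF n).mono fun x hx => (hx _).trans (Real.le_norm_self _)

end MeasureTheory

theorem caratheodory_superposition_tendsto_general
    (M N : ℕ) (Ω : Set (Fin M → ℝ))
    (hΩbdd : Bornology.IsBounded Ω)
    (C₁ γ : ℝ) (hγ : 0 < γ)
    (Hn : ℕ → (Fin M → ℝ) → EuclideanSpace ℝ (Fin N) → ℝ)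
    (H : (Fin M → ℝ) → EuclideanSpace ℝ (Fin N) → ℝ)
    -- each `Hₙ` is a Carathéodory function
    (hHnMeas : ∀ n ξ, AEMeasurable (fun x => Hn n x ξ) (volume.restrict Ω))
    (hHnCont : ∀ n, ∀ᵐ x ∂(volume.restrict Ω), Continuous (Hn n x))
    -- `H` is a Carathéodory function
    (hHMeas : ∀ ξ, AEMeasurable (fun x => H x ξ) (volume.restrict Ω))
    (hHCont : ∀ᵐ x ∂(volume.restrict Ω), Continuous (H x))
    -- growth bound `|Hₙ(x,ξ)| ≤ C₁(1 + |ξ|^γ)`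
    (hGrowth : ∀ n, ∀ᵐ x ∂(volume.restrict Ω),
      ∀ ξ : EuclideanSpace ℝ (Fin N), |Hn n x ξ| ≤ C₁ * (1 + ‖ξ‖ ^ γ))
    -- for a.e. `x`, `Hₙ(x,·) → H(x,·)` uniformly on compact sets
    (hUnif : ∀ᵐ x ∂(volume.restrict Ω), ∀ K : Set (EuclideanSpace ℝ (Fin N)),
      IsCompact K → TendstoUniformlyOn (fun n ξ => Hn n x ξ) (H x) atTop K)
    (p : ℝ) (hp : γ ≤ p)
    (u : (Fin M → ℝ) → EuclideanSpace ℝ (Fin N))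
    (un : ℕ → (Fin M → ℝ) → EuclideanSpace ℝ (Fin N))
    (hu : MemLp u (ENNReal.ofReal p) (volume.restrict Ω))
    (hun : ∀ n, MemLp (un n) (ENNReal.ofReal p) (volume.restrict Ω))
    -- `uₙ → u` in `L^p(Ω; ℝ^N)`
    (hConv : Tendsto (fun n => lpNorm Ω p (fun x => un n x - u x)) atTop (𝓝 0)) :
    Tendsto (fun n => lpNorm Ω (p / γ) (fun x => Hn n x (un n x) - H x (u x)))
      atTop (𝓝 0) := by
  simp only [_root_.lpNorm, ENNReal.ofReal_div_of_pos hγ]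
  set μ := volume.restrict Ω
  have : IsFiniteMeasure μ := isFiniteMeasure_restrict.2 hΩbdd.measure_lt_top.ne
  have hq : 1 ≤ ENNReal.ofReal p / ENNReal.ofReal γ := by
    rw [← ENNReal.ofReal_div_of_pos hγ]
    exact ENNReal.one_le_ofReal.2 ((one_le_div hγ).2 hp)
  have hH_growth : ∀ᵐ x ∂μ, ∀ ξ, |H x ξ| ≤ C₁ * (1 + ‖ξ‖ ^ γ) := by
    filter_upwards [ae_all_iff.2 hGrowth, hUnif] with x hgx hux ξ
    exact le_of_tendsto
      (tendstoUniformlyOn_singleton_iff_tendsto.1 (hux {ξ} isCompact_singleton)).abs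
      (Eventually.of_forall fun n => hgx n ξ)
  have hHn_meas n : AEStronglyMeasurable (fun x => Hn n x (un n x)) μ :=
    ((hun n).1.aemeasurable_caratheodory_comp (hHnMeas n) (hHnCont n)).aestronglyMeasurable
  have hH_meas : AEStronglyMeasurable (fun x => H x (u x)) μ :=
    (hu.1.aemeasurable_caratheodory_comp hHMeas hHCont).aestronglyMeasurable
  have hun_u : TendstoInMeasure μ un atTop u :=
    tendstoInMeasure_of_tendsto_eLpNorm (ENNReal.ofReal_pos.2 (hγ.trans_le hp)).ne'
      (fun n => (hun n).1) hu.1 hConv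
  have hHn_H : ∀ᵐ x ∂μ, TendstoLocallyUniformly (fun n => Hn n x) (H x) atTop :=
    hUnif.mono fun x hx => tendstoLocallyUniformly_iff_forall_isCompact.2 hx
  exact tendsto_Lp_finite_of_tendstoInMeasure hq
    (ENNReal.div_ne_top ENNReal.ofReal_ne_top (by simpa using hγ)) hHn_meas
    (hu.caratheodory_comp_of_growth hγ.le hH_growth hH_meas)
    (unifIntegrable_caratheodory_comp_of_growth hγ hGrowth ENNReal.ofReal_ne_top hq hun hu hConv)
    (hun_u.caratheodory_comp hHn_H hHCont hHn_meas)

/-- convergence of Carathéodory superpositions `Hₙ(·, uₙ)` to `H(·, u)`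
in `L^{p/γ}(Ω)` when `uₙ → u` in `L^p(Ω; ℝ^N)`. -/
theorem caratheodory_superposition_tendsto
    (M N : ℕ) (Ω : Set (Fin M → ℝ)) (hΩmeas : MeasurableSet Ω)
    (hΩbdd : Bornology.IsBounded Ω)
    (C₁ γ : ℝ) (hC₁ : 0 < C₁) (hγ : 0 < γ)
    (Hn : ℕ → (Fin M → ℝ) → EuclideanSpace ℝ (Fin N) → ℝ)
    (H : (Fin M → ℝ) → EuclideanSpace ℝ (Fin N) → ℝ)
    -- each `Hₙ` is a Carathéodory function
    (hHnMeas : ∀ n ξ, AEMeasurable (fun x => Hn n x ξ) (volume.restrict Ω))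
    (hHnCont : ∀ n, ∀ᵐ x ∂(volume.restrict Ω), Continuous (Hn n x))
    -- `H` is a Carathéodory function
    (hHMeas : ∀ ξ, AEMeasurable (fun x => H x ξ) (volume.restrict Ω))
    (hHCont : ∀ᵐ x ∂(volume.restrict Ω), Continuous (H x))
    -- growth bound `|Hₙ(x,ξ)| ≤ C₁(1 + |ξ|^γ)`
    (hGrowth : ∀ n, ∀ᵐ x ∂(volume.restrict Ω),
      ∀ ξ : EuclideanSpace ℝ (Fin N), |Hn n x ξ| ≤ C₁ * (1 + ‖ξ‖ ^ γ))
    -- for a.e. `x`, `Hₙ(x,·) → H(x,·)` uniformly on compact sets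
    (hUnif : ∀ᵐ x ∂(volume.restrict Ω), ∀ K : Set (EuclideanSpace ℝ (Fin N)),
      IsCompact K → TendstoUniformlyOn (fun n ξ => Hn n x ξ) (H x) atTop K)
    (p : ℝ) (hp : γ ≤ p)
    (u : (Fin M → ℝ) → EuclideanSpace ℝ (Fin N))
    (un : ℕ → (Fin M → ℝ) → EuclideanSpace ℝ (Fin N))
    (hu : MemLp u (ENNReal.ofReal p) (volume.restrict Ω))
    (hun : ∀ n, MemLp (un n) (ENNReal.ofReal p) (volume.restrict Ω))
    -- `uₙ → u` in `L^p(Ω; ℝ^N)`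
    (hConv : Tendsto (fun n => lpNorm Ω p (fun x => un n x - u x)) atTop (𝓝 0)) :
    Tendsto (fun n => lpNorm Ω (p / γ) (fun x => Hn n x (un n x) - H x (u x)))
      atTop (𝓝 0) :=
  caratheodory_superposition_tendsto_general M N Ω hΩbdd C₁ γ hγ Hn H hHnMeas hHnCont hHMeas hHCont
    hGrowth hUnif p hp u un hu hun hConv
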